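/- arXiv:0710.5362 — 7 statements merged into one kernel-verified Lean document; each statement's English description precedes it below -/
import Mathlib

section
/- In the Hecke algebra of type A, the Baxterised elements g_i(u) = ([1-u] + [u]·a_i)/[1+u] satisfy the Yang-Baxter equation g_i(u)·g_{i+1}(u+v)·g_i(v) = g_{i+1}(v)·g_i(u+v)·g_{i+1}(u), for all spectral parameters u, v for which the expressions are defined. -/
/-!
Expanding `(α₁ + β₁ a_i)(α₂ + β₂ a_{i+1})(α₃ + β₃ a_i)` and its mirror image
`(α₃ + β₃ a_{i+1})(α₂ + β₂ a_i)(α₁ + β₁ a_{i+1})` with `a² = [2] a` and the braid relation, all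
words except `a_i` and `a_{i+1}` match, and the two sides differ by a scalar multiple of
`a_i - a_{i+1}`. For `(αₖ, βₖ) = ([1-w], [w])` with `w = u, u+v, v` that scalar vanishes by an
identity between Laurent polynomials in `q`, `q^u`, `q^v`. The normalising factors `[1+w]⁻¹`
are the same scalars on both sides.
-/

noncomputable section

/-- The q-number `[x] = (q^x - q^{-x})/(q - q⁻¹)` for a complex exponent `x`. -/
noncomputable def qnum (q x : ℂ) : ℂ := (q ^ x - q ^ (-x)) / (q - q⁻¹)

theorem yang_baxter_of_braid {R A : Type*} [CommRing R] [Ring A] [Algebra R A] {t : R}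
    {e f : A} (he : e * e = t • e) (hf : f * f = t • f)
    (hbraid : e * f * e - e = f * e * f - f) {a₁ b₁ a₂ b₂ a₃ b₃ : R}
    (h : b₂ * (a₁ * a₃ - b₁ * b₃) = a₂ * (a₁ * b₃ + b₁ * a₃ + t * b₁ * b₃)) :
    (a₁ • 1 + b₁ • e) * (a₂ • 1 + b₂ • f) * (a₃ • 1 + b₃ • e)
      = (a₃ • 1 + b₃ • f) * (a₂ • 1 + b₂ • e) * (a₁ • 1 + b₁ • f) := by
  have hefe : e * f * e = f * e * f - f + e := by rw [← hbraid]; abel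
  have defect : (a₁ • 1 + b₁ • e) * (a₂ • 1 + b₂ • f) * (a₃ • 1 + b₃ • e)
      - (a₃ • 1 + b₃ • f) * (a₂ • 1 + b₂ • e) * (a₁ • 1 + b₁ • f)
      = (a₂ * (a₁ * b₃ + b₁ * a₃ + t * b₁ * b₃) - b₂ * (a₁ * a₃ - b₁ * b₃)) • (e - f) := by
    simp only [mul_add, add_mul, smul_mul_assoc, mul_smul_comm, smul_smul, mul_one, one_mul,
      he, hf, hefe, smul_add, smul_sub]
    match_scalars <;> ring
  rwa [h, sub_self, zero_smul, sub_eq_zero] at defect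

theorem qnum_two {q : ℂ} (hd : q - q⁻¹ ≠ 0) : qnum q 2 = q + q⁻¹ := by
  have hq : q ≠ 0 := by rintro rfl; simp at hd
  rw [qnum, Complex.cpow_neg, Complex.cpow_ofNat, div_eq_iff hd]
  field_simp
  ring

theorem qnum_yang_baxter (q u v : ℂ) :
    qnum q (u + v) * (qnum q (1 - u) * qnum q (1 - v) - qnum q u * qnum q v)
      = qnum q (1 - (u + v)) * (qnum q (1 - u) * qnum q v + qnum q u * qnum q (1 - v)
        + qnum q 2 * qnum q u * qnum q v) := by
  by_cases hd : q - q⁻¹ = 0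
  · simp [qnum, hd]
  have hq : q ≠ 0 := by rintro rfl; simp at hd
  have hx : q ^ u ≠ 0 := by simp [Complex.cpow_eq_zero_iff, hq]
  have hy : q ^ v ≠ 0 := by simp [Complex.cpow_eq_zero_iff, hq]
  rw [qnum_two hd]
  simp only [qnum, neg_sub, neg_add, Complex.cpow_add _ _ hq, Complex.cpow_sub _ _ hq,
    Complex.cpow_neg, Complex.cpow_one]
  field_simp
  ring

theorem baxterised_yang_baxter_general (N : ℕ) (A : Type*) [Ring A] [Algebra ℂ A]
    (q : ℂ) (a : ℕ → A)
    (hsq : ∀ i, 1 ≤ i → i ≤ N - 1 → a i * a i = qnum q 2 • a i)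
    (hbraid : ∀ i, 1 ≤ i → i + 1 ≤ N - 1 →
      a i * a (i + 1) * a i - a i = a (i + 1) * a i * a (i + 1) - a (i + 1))
    (i : ℕ) (h1 : 1 ≤ i) (h2 : i + 1 ≤ N - 1)
    (u v : ℂ) :
    letI gB : ℕ → ℂ → A := fun j w =>
      (qnum q (1 + w))⁻¹ • (qnum q (1 - w) • (1 : A) + qnum q w • a j)
    gB i u * gB (i + 1) (u + v) * gB i v
      = gB (i + 1) v * gB i (u + v) * gB (i + 1) u := by
  simp only [smul_mul_smul_comm]
  congr 1
  · ring
  · exact yang_baxter_of_braid (hsq i h1 (by omega)) (hsq (i + 1) (by omega) h2)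
      (hbraid i h1 h2) (qnum_yang_baxter q u v)

/-- The Yang-Baxter equation for the Baxterised elements
`g_i(u) = ([1-u] + [u] a_i)/[1+u]` of the type-A Hecke algebra. -/
theorem baxterised_yang_baxter (N : ℕ) (A : Type*) [Ring A] [Algebra ℂ A]
    (q : ℂ) (hq : q ≠ 0) (hqq : q - q⁻¹ ≠ 0) (a : ℕ → A)
    (hsq : ∀ i, 1 ≤ i → i ≤ N - 1 → a i * a i = qnum q 2 • a i)
    (hcomm : ∀ i j, 1 ≤ i → i ≤ N - 1 → 1 ≤ j → j ≤ N - 1 → (i + 1 < j ∨ j + 1 < i) →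
      a i * a j = a j * a i)
    (hbraid : ∀ i, 1 ≤ i → i + 1 ≤ N - 1 →
      a i * a (i + 1) * a i - a i = a (i + 1) * a i * a (i + 1) - a (i + 1))
    (i : ℕ) (h1 : 1 ≤ i) (h2 : i + 1 ≤ N - 1)
    (u v : ℂ) (hu : qnum q (1 + u) ≠ 0) (hv : qnum q (1 + v) ≠ 0)
    (huv : qnum q (1 + (u + v)) ≠ 0) :
    letI gB : ℕ → ℂ → A := fun j w =>
      (qnum q (1 + w))⁻¹ • (qnum q (1 - w) • (1 : A) + qnum q w • a j)
    gB i u * gB (i + 1) (u + v) * gB i v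
      = gB (i + 1) v * gB i (u + v) * gB (i + 1) u :=
  baxterised_yang_baxter_general N A q a hsq hbraid i h1 h2 u v
end
end

section
/- In the Iwahori-Hecke algebra of type B_N, the element a_0 := (-q^{-ω} - g_0)/(q^{ω+1} - q^{-ω-1}) satisfies a_0² = ([ω]/[ω+1])·a_0 and a_0 a_1 a_0 a_1 - a_0 a_1 = a_1 a_0 a_1 a_0 - a_1 a_0, where a_1 = q - g_1. -/
/-!
Put `x := -q^{-ω} - g₀`, so that `a₀ = x / [ω+1]'` with `[ω+1]' = q^{ω+1} - q^{-ω-1}`. The quadratic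
relations make `x` and `a₁` quasi-idempotent: `x² = (q^ω - q^{-ω}) x` and `a₁² = (q + q⁻¹) a₁`.
For quasi-idempotents `x, y`, the braid defect `uvuv - vuvu` of the shifted pair `u = α - x`,
`v = β - y` equals that of `x, y` plus a scalar multiple of `xy - yx`; for `g₀ = -q^{-ω} - x`,
`g₁ = q - a₁` the scalar is `-[ω+1]'`. So the braid relation gives
`x a₁ x a₁ - a₁ x a₁ x = [ω+1]' (x a₁ - a₁ x)`, and dividing `x` by `[ω+1]'` yields the claim.
-/

namespace HeckeTypeB

variable {R A : Type*} [CommRing R] [Ring A] [Algebra R A]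

def braidComm (x y : A) : A := x * y * x * y - y * x * y * x

lemma braidComm_smul_left (r : R) (x y : A) :
    braidComm (r • x) y = (r * r) • braidComm x y := by
  simp only [braidComm, smul_mul_assoc, mul_smul_comm, smul_smul, smul_sub]

lemma mul_self_neg_smul_one_sub_of_mul_eq_zero {g : A} {a b : R}
    (h : (g + a • 1) * (g + b • 1) = 0) :
    (-a • 1 - g) * (-a • 1 - g) = (b - a) • (-a • 1 - g) ∧
      (-b • 1 - g) * (-b • 1 - g) = (a - b) • (-b • 1 - g) := by
  constructor
  · calc (-a • 1 - g) * (-a • 1 - g) = (g + a • 1) * (g + b • 1) + (b - a) • (-a • 1 - g) := by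
          simp only [sub_mul, mul_sub, add_mul, mul_add, smul_mul_assoc, mul_smul_comm, one_mul,
            mul_one]
          module
      _ = _ := by rw [h, zero_add]
  · calc (-b • 1 - g) * (-b • 1 - g) = (g + a • 1) * (g + b • 1) + (a - b) • (-b • 1 - g) := by
          simp only [sub_mul, mul_sub, add_mul, mul_add, smul_mul_assoc, mul_smul_comm, one_mul,
            mul_one]
          module
      _ = _ := by rw [h, zero_add]

lemma braidComm_smul_one_sub {x y : A} {s t : R} (hx : x * x = s • x) (hy : y * y = t • y)
    (α β : R) :
    braidComm (α • 1 - x) (β • 1 - y) =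
      braidComm x y + (2 * α * β - β * s - α * t) • (x * y - y * x) := by
  simp only [braidComm, sub_mul, mul_sub, smul_mul_assoc, mul_smul_comm, one_mul, mul_one,
    mul_assoc, hx, hy, smul_sub, smul_smul]
  module

end HeckeTypeB

open HeckeTypeB

theorem hecke_typeB_a0_relations_general (A : Type*) [Ring A] [Algebra ℂ A]
    (q w : ℂ) (hqq : q - q⁻¹ ≠ 0)
    (g0 g1 : A)
    (hg0 : (g0 + w • (1 : A)) * (g0 + w⁻¹ • (1 : A)) = 0)
    (hg1 : (g1 - q • (1 : A)) * (g1 + q⁻¹ • (1 : A)) = 0)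
    (hbraid : g0 * g1 * g0 * g1 = g1 * g0 * g1 * g0) :
    letI a0 : A := (q * w - (q * w)⁻¹)⁻¹ • (-(w⁻¹) • (1 : A) - g0)
    letI a1 : A := q • (1 : A) - g1
    a0 * a0 = (((w - w⁻¹) / (q - q⁻¹)) / ((q * w - (q * w)⁻¹) / (q - q⁻¹))) • a0 ∧
    a0 * a1 * a0 * a1 - a0 * a1 = a1 * a0 * a1 * a0 - a1 * a0 := by
  set d := q * w - (q * w)⁻¹
  set x : A := -(w⁻¹) • (1 : A) - g0
  set a1 : A := q • (1 : A) - g1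
  have hx : x * x = (w - w⁻¹) • x := (mul_self_neg_smul_one_sub_of_mul_eq_zero hg0).2
  have ha1 : a1 * a1 = (q⁻¹ + q) • a1 := by
    rw [sub_eq_add_neg, ← neg_smul] at hg1
    simpa only [neg_neg, sub_neg_eq_add] using (mul_self_neg_smul_one_sub_of_mul_eq_zero hg1).1
  have hdefect : braidComm x a1 = d • (x * a1 - a1 * x) := by
    have h := braidComm_smul_one_sub hx ha1 (-(w⁻¹)) q
    have hg0x : -(w⁻¹) • (1 : A) - x = g0 := by simp [x]
    have hg1a : q • (1 : A) - a1 = g1 := by simp [a1]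
    rw [hg0x, hg1a, braidComm, hbraid, sub_self] at h
    rw [eq_neg_of_add_eq_zero_left h.symm, ← neg_smul]
    congr 1
    simp only [d, mul_inv]
    ring
  constructor
  · rw [div_div_div_cancel_right₀ hqq, smul_mul_smul_comm, hx, smul_smul, smul_smul]
    congr 1
    ring
  · rw [sub_eq_sub_iff_sub_eq_sub, ← braidComm, braidComm_smul_left, hdefect, smul_smul,
      smul_mul_assoc, mul_smul_comm, ← smul_sub]
    congr 1
    simpa [mul_right_comm] using mul_inv_mul_cancel d⁻¹

/-- In the Iwahori-Hecke algebra of type `B_N`, the boundary element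
`a₀ = (-q^{-ω} - g₀)/(q^{ω+1} - q^{-ω-1})` satisfies `a₀² = ([ω]/[ω+1]) a₀` and the
mixed braid-type relation with `a₁ = q - g₁`.  Here `w` denotes the fixed complex
number `q^ω`. -/
theorem hecke_typeB_a0_relations (A : Type*) [Ring A] [Algebra ℂ A]
    (q w : ℂ) (hq : q ≠ 0) (hw : w ≠ 0) (hqq : q - q⁻¹ ≠ 0)
    (hd : q * w - (q * w)⁻¹ ≠ 0)
    (g0 g1 : A)
    (hg0 : (g0 + w • (1 : A)) * (g0 + w⁻¹ • (1 : A)) = 0)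
    (hg1 : (g1 - q • (1 : A)) * (g1 + q⁻¹ • (1 : A)) = 0)
    (hbraid : g0 * g1 * g0 * g1 = g1 * g0 * g1 * g0) :
    letI a0 : A := (q * w - (q * w)⁻¹)⁻¹ • (-(w⁻¹) • (1 : A) - g0)
    letI a1 : A := q • (1 : A) - g1
    a0 * a0 = (((w - w⁻¹) / (q - q⁻¹)) / ((q * w - (q * w)⁻¹) / (q - q⁻¹))) • a0 ∧
    a0 * a1 * a0 * a1 - a0 * a1 = a1 * a0 * a1 * a0 - a1 * a0 :=
  hecke_typeB_a0_relations_general A q w hqq g0 g1 hg0 hg1 hbraid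
end

section
/- The operators a_i := (π_i + 1)·([x_i - x_{i+1} - 1]/[x_i - x_{i+1}]) acting on functions of N variables satisfy the braid-type Hecke relation a_i a_{i+1} a_i - a_i = a_{i+1} a_i a_{i+1} - a_{i+1}. -/
noncomputable section

/-- The operator exchanging the variables `x_i` and `x_{i+1}`. -/
def swapVar (i : ℕ) (x : ℕ → ℂ) : ℕ → ℂ :=
  fun j => if j = i then x (i + 1) else if j = i + 1 then x i else x j

/-- The symmetrising operator `a_i = (π_i + 1) ∘ (multiplication by
`[x_i - x_{i+1} - 1]/[x_i - x_{i+1}]`)` acting on functions of the variables. -/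
noncomputable def aOp (q : ℂ) (i : ℕ) (f : (ℕ → ℂ) → ℂ) : (ℕ → ℂ) → ℂ :=
  fun x =>
    qnum q (swapVar i x i - swapVar i x (i + 1) - 1) / qnum q (swapVar i x i - swapVar i x (i + 1))
      * f (swapVar i x)
    + qnum q (x i - x (i + 1) - 1) / qnum q (x i - x (i + 1)) * f x

/-!
Write `c(u) = [u - 1]/[u]`, so that `a_i f = c(x_{i+1} - x_i) · f ∘ π_i + c(x_i - x_{i+1}) · f`.
Expanding both sides of the braid relation over the permutations of `x_i, x_{i+1}, x_{i+2}`,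
it holds for every coefficient function `c` with `c(u) + c(-u) = κ` constant and
`c(u) c(v) - 1 = (c(u) + c(v) - κ) c(u + v)`. For the q-ratio, with `κ = q + q⁻¹`, these are the
q-number identities `[u - 1] + [u + 1] = (q + q⁻¹)[u]`, `[u - 1][v - 1] - [u][v] = -[u + v - 1]`
and `[u + 1][v] - [u][v - 1] = [u + v]`.
-/

theorem qnum_neg (q u : ℂ) : qnum q (-u) = -qnum q u := by
  simp only [qnum, neg_neg]
  ring

theorem qnum_eq_zero_of_sub_inv_eq_zero {q : ℂ} (h : q - q⁻¹ = 0) (u : ℂ) : qnum q u = 0 := by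
  simp [qnum, h]

theorem ne_zero_of_sub_inv_ne_zero {q : ℂ} (h : q - q⁻¹ ≠ 0) : q ≠ 0 := by
  rintro rfl
  simp at h

theorem qnum_sub_one_add_qnum_add_one (q u : ℂ) :
    qnum q (u - 1) + qnum q (u + 1) = (q + q⁻¹) * qnum q u := by
  rcases eq_or_ne (q - q⁻¹) 0 with h | h
  · simp [qnum_eq_zero_of_sub_inv_eq_zero h]
  have hq := ne_zero_of_sub_inv_ne_zero h
  have hu : q ^ u ≠ 0 := by simp [hq]
  simp only [qnum, neg_add, neg_sub, Complex.cpow_add _ _ hq, Complex.cpow_sub _ _ hq,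
    Complex.cpow_neg, Complex.cpow_one]
  field_simp
  ring

theorem qnum_sub_one_mul_qnum_sub_one_sub (q u v : ℂ) :
    qnum q (u - 1) * qnum q (v - 1) - qnum q u * qnum q v = -qnum q (u + v - 1) := by
  rcases eq_or_ne (q - q⁻¹) 0 with h | h
  · simp [qnum_eq_zero_of_sub_inv_eq_zero h]
  have hq := ne_zero_of_sub_inv_ne_zero h
  have hu : q ^ u ≠ 0 := by simp [hq]
  have hv : q ^ v ≠ 0 := by simp [hq]
  have hq2 : q ^ 2 - 1 ≠ 0 := by
    contrapose! h
    field_simp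
    linear_combination h
  simp only [qnum, neg_sub, Complex.cpow_add _ _ hq, Complex.cpow_sub _ _ hq,
    Complex.cpow_neg, Complex.cpow_one]
  field_simp
  ring

theorem qnum_add_one_mul_qnum_sub (q u v : ℂ) :
    qnum q (u + 1) * qnum q v - qnum q u * qnum q (v - 1) = qnum q (u + v) := by
  rcases eq_or_ne (q - q⁻¹) 0 with h | h
  · simp [qnum_eq_zero_of_sub_inv_eq_zero h]
  have hq := ne_zero_of_sub_inv_ne_zero h
  have hu : q ^ u ≠ 0 := by simp [hq]
  have hv : q ^ v ≠ 0 := by simp [hq]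
  have hq2 : q ^ 2 - 1 ≠ 0 := by
    contrapose! h
    field_simp
    linear_combination h
  simp only [qnum, neg_add, neg_sub, Complex.cpow_add _ _ hq, Complex.cpow_sub _ _ hq,
    Complex.cpow_neg, Complex.cpow_one]
  field_simp
  ring

def qnumRatio (q u : ℂ) : ℂ := qnum q (u - 1) / qnum q u

theorem qnumRatio_neg (q u : ℂ) : qnumRatio q (-u) = qnum q (u + 1) / qnum q u := by
  rw [qnumRatio, ← neg_add', qnum_neg, qnum_neg, neg_div_neg_eq]

section QNumRatio

variable {q u v : ℂ}

theorem qnumRatio_add_qnumRatio_neg (hu : qnum q u ≠ 0) :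
    qnumRatio q u + qnumRatio q (-u) = q + q⁻¹ := by
  rw [qnumRatio_neg, qnumRatio, ← add_div, qnum_sub_one_add_qnum_add_one,
    mul_div_cancel_right₀ _ hu]

theorem qnumRatio_mul_qnumRatio_sub_one (hu : qnum q u ≠ 0) (hv : qnum q v ≠ 0)
    (huv : qnum q (u + v) ≠ 0) :
    qnumRatio q u * qnumRatio q v - 1
      = (qnumRatio q u + qnumRatio q v - (q + q⁻¹)) * qnumRatio q (u + v) := by
  have hprod : qnumRatio q u * qnumRatio q v - 1
      = -qnum q (u + v - 1) / (qnum q u * qnum q v) := by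
    rw [qnumRatio, qnumRatio, div_mul_div_comm, div_sub_one (mul_ne_zero hu hv),
      qnum_sub_one_mul_qnum_sub_one_sub]
  have hsum : qnumRatio q u + qnumRatio q v - (q + q⁻¹)
      = -qnum q (u + v) / (qnum q u * qnum q v) := by
    rw [← qnumRatio_add_qnumRatio_neg hu, qnumRatio_neg, qnumRatio, qnumRatio]
    field_simp
    linear_combination -qnum_add_one_mul_qnum_sub q u v
  rw [hprod, hsum, qnumRatio]
  field_simp

end QNumRatio

section SwapVar

variable (i : ℕ) (x : ℕ → ℂ)

@[simp] theorem swapVar_apply_left : swapVar i x i = x (i + 1) := by simp [swapVar]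

@[simp] theorem swapVar_apply_right : swapVar i x (i + 1) = x i := by simp [swapVar]

theorem swapVar_apply_of_ne {j : ℕ} (h₁ : j ≠ i) (h₂ : j ≠ i + 1) : swapVar i x j = x j := by
  simp [swapVar, h₁, h₂]

@[simp] theorem swapVar_swapVar : swapVar i (swapVar i x) = x := by
  funext j
  simp only [swapVar]
  split_ifs <;> simp_all

theorem swapVar_braid :
    swapVar (i + 1) (swapVar i (swapVar (i + 1) x))
      = swapVar i (swapVar (i + 1) (swapVar i x)) := by
  funext j
  simp only [swapVar]
  split_ifs <;> first | rfl | omega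

end SwapVar

def symOp (c : ℂ → ℂ) (i : ℕ) (f : (ℕ → ℂ) → ℂ) (x : ℕ → ℂ) : ℂ :=
  c (x (i + 1) - x i) * f (swapVar i x) + c (x i - x (i + 1)) * f x

theorem aOp_eq_symOp (q : ℂ) (i : ℕ) : aOp q i = symOp (qnumRatio q) i := by
  funext f x
  simp [aOp, symOp, qnumRatio]

theorem symOp_braid (c : ℂ → ℂ) (κ : ℂ) (i : ℕ) (f : (ℕ → ℂ) → ℂ) (x : ℕ → ℂ)
    (hu : c (x i - x (i + 1)) + c (x (i + 1) - x i) = κ)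
    (hv : c (x (i + 1) - x (i + 2)) + c (x (i + 2) - x (i + 1)) = κ)
    (huv : c (x i - x (i + 1)) * c (x (i + 1) - x (i + 2)) - 1
      = (c (x i - x (i + 1)) + c (x (i + 1) - x (i + 2)) - κ) * c (x i - x (i + 2))) :
    symOp c i (symOp c (i + 1) (symOp c i f)) x - symOp c i f x
      = symOp c (i + 1) (symOp c i (symOp c (i + 1) f)) x - symOp c (i + 1) f x := by
  rw [show i + 2 = i + 1 + 1 from rfl] at hv huv
  have h01 : i ≠ i + 1 := by omega
  have h02 : i ≠ i + 1 + 1 := by omega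
  have h12 : i + 1 + 1 ≠ i + 1 := by omega
  simp only [symOp, swapVar_swapVar, swapVar_braid, swapVar_apply_left, swapVar_apply_right,
    swapVar_apply_of_ne _ _ h01 h02, swapVar_apply_of_ne _ _ h02.symm h12]
  set cu := c (x i - x (i + 1))
  set cv := c (x (i + 1) - x (i + 1 + 1))
  set cw := c (x i - x (i + 1 + 1))
  linear_combination (c (x (i + 1) - x i) * f (swapVar i x) + cu * f x) * (huv + cw * hu)
    - (c (x (i + 1 + 1) - x (i + 1)) * f (swapVar (i + 1) x) + cv * f x) * (huv + cw * hv)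

theorem aOp_braid_general (q : ℂ)
    (i : ℕ) (f : (ℕ → ℂ) → ℂ) (x : ℕ → ℂ)
    (hx : ∀ j k, i ≤ j → j ≤ i + 2 → i ≤ k → k ≤ i + 2 → j ≠ k →
      qnum q (x j - x k) ≠ 0) :
    aOp q i (aOp q (i + 1) (aOp q i f)) x - aOp q i f x
      = aOp q (i + 1) (aOp q i (aOp q (i + 1) f)) x - aOp q (i + 1) f x := by
  have hu : qnum q (x i - x (i + 1)) ≠ 0 :=
    hx i (i + 1) le_rfl (by omega) (by omega) (by omega) (by omega)
  have hv : qnum q (x (i + 1) - x (i + 2)) ≠ 0 :=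
    hx (i + 1) (i + 2) (by omega) (by omega) (by omega) le_rfl (by omega)
  have huv : qnum q (x i - x (i + 2)) ≠ 0 :=
    hx i (i + 2) le_rfl (by omega) (by omega) le_rfl (by omega)
  simp only [aOp_eq_symOp]
  apply symOp_braid _ (q + q⁻¹)
  · simpa only [neg_sub] using qnumRatio_add_qnumRatio_neg hu
  · simpa only [neg_sub] using qnumRatio_add_qnumRatio_neg hv
  · simpa only [sub_add_sub_cancel] using
      qnumRatio_mul_qnumRatio_sub_one hu hv (by rwa [sub_add_sub_cancel])

/-- The symmetrising operators satisfy the braid-type Hecke relation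
`a_i a_{i+1} a_i - a_i = a_{i+1} a_i a_{i+1} - a_{i+1}`. -/
theorem aOp_braid (q : ℂ) (hq : q ≠ 0) (hqq : q - q⁻¹ ≠ 0)
    (i : ℕ) (f : (ℕ → ℂ) → ℂ) (x : ℕ → ℂ)
    (hx : ∀ j k, i ≤ j → j ≤ i + 2 → i ≤ k → k ≤ i + 2 → j ≠ k →
      qnum q (x j - x k) ≠ 0) :
    aOp q i (aOp q (i + 1) (aOp q i f)) x - aOp q i f x
      = aOp q (i + 1) (aOp q i (aOp q (i + 1) f)) x - aOp q (i + 1) f x :=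
  aOp_braid_general q i f x hx
end
end

section
/- If a sum-decomposition lemma holds: for the ordered product H_{i,i+r}(u) := h_i(u)h_{i+1}(u+1)⋯h_{i+r}(u+r) of renormalised Baxterised Hecke elements, one has for generic u, v the expansion H_{i,i+r}(u) = H_{i,i+r}(u+v) + Σ_{k=0}^{r} ([v]/([u+k][u+v+k]))·H_{i,i+k-1}(u+v)·H_{i+k+1,i+r}(u+k+1), where H_{i,i-1}(w) := 1. -/
noncomputable section
open scoped BigOperators

/-- The renormalised Baxterised element `h_i(u) = ([u+1]/[u])·1 - a_i`. -/
noncomputable def hOp {A : Type*} [Ring A] [Algebra ℂ A] (q : ℂ) (a : ℕ → A)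
    (i : ℕ) (u : ℂ) : A :=
  (qnum q (u + 1) / qnum q u) • (1 : A) - a i

/-- The ordered product `H_{i,i+n-1}(u) = h_i(u) h_{i+1}(u+1) ⋯ h_{i+n-1}(u+n-1)`,
with the empty product equal to `1`. -/
noncomputable def Hprod {A : Type*} [Ring A] [Algebra ℂ A] (q : ℂ) (a : ℕ → A)
    (i n : ℕ) (u : ℂ) : A :=
  ((List.range n).map (fun k => hOp q a (i + k) (u + (k : ℂ)))).prod

/-!
Each factor moves by a scalar when its spectral parameter is shifted: the q-number identity
`[w+1][w+v] - [w+v+1][w] = [v]` gives `h_j(w) - h_j(w+v) = [v]/([w][w+v])`. The expansion is then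
the noncommutative telescoping `∏ f - ∏ g = Σ_k (∏_{j<k} g_j) (f_k - g_k) (∏_{j>k} f_j)`.
-/

theorem List.prod_map_range_sub_prod_map_range {R : Type*} [Ring R] (f g : ℕ → R) (n : ℕ) :
    ((List.range n).map f).prod - ((List.range n).map g).prod
      = ∑ k ∈ Finset.range n, ((List.range k).map g).prod * (f k - g k) *
          ((List.range (n - (k + 1))).map fun j => f (k + 1 + j)).prod := by
  induction n with
  | zero => simp
  | succ n ih =>
    have tail_succ : ∀ k ∈ Finset.range n,
        ((List.range (n - (k + 1))).map fun j => f (k + 1 + j)).prod * f n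
          = ((List.range (n + 1 - (k + 1))).map fun j => f (k + 1 + j)).prod := by
      intro k hk
      obtain ⟨m, rfl⟩ := Nat.exists_eq_add_of_lt (Finset.mem_range.mp hk)
      rw [show k + m + 1 + 1 - (k + 1) = m + 1 by omega, show k + m + 1 - (k + 1) = m by omega,
        List.range_succ, List.map_append, List.prod_append, List.map_singleton,
        List.prod_singleton, show k + 1 + m = k + m + 1 by omega]
    have sum_succ : ∑ k ∈ Finset.range n, ((List.range k).map g).prod * (f k - g k) *
          ((List.range (n + 1 - (k + 1))).map fun j => f (k + 1 + j)).prod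
        = (((List.range n).map f).prod - ((List.range n).map g).prod) * f n := by
      rw [ih, Finset.sum_mul]
      exact Finset.sum_congr rfl fun k hk => by rw [mul_assoc _ _ (f n), tail_succ k hk]
    rw [Finset.sum_range_succ, sum_succ]
    simp only [List.range_succ, List.map_append, List.prod_append, List.map_singleton,
      List.prod_singleton, Nat.sub_self, List.range_zero, List.map_nil, List.prod_nil, mul_one]
    noncomm_ring

theorem qnum_add_one_mul_sub (q w v : ℂ) :
    qnum q (w + 1) * qnum q (w + v) - qnum q (w + v + 1) * qnum q w = qnum q v := by
  by_cases hqq : q - q⁻¹ = 0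
  · simp [qnum, hqq]
  have hq : q ≠ 0 := by rintro rfl; simp at hqq
  have hE : q ^ w ≠ 0 := by simp [Complex.cpow_eq_zero_iff, hq]
  have hV : q ^ v ≠ 0 := by simp [Complex.cpow_eq_zero_iff, hq]
  simp only [qnum, Complex.cpow_neg, Complex.cpow_add _ _ hq, Complex.cpow_one]
  rw [div_mul_div_comm, div_mul_div_comm, ← sub_div, div_eq_div_iff (mul_ne_zero hqq hqq) hqq]
  field_simp
  ring

theorem hOp_sub_hOp_add {A : Type*} [Ring A] [Algebra ℂ A] (q : ℂ) (a : ℕ → A) (j : ℕ)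
    {w : ℂ} (v : ℂ) (hw : qnum q w ≠ 0) (hwv : qnum q (w + v) ≠ 0) :
    hOp q a j w - hOp q a j (w + v) = (qnum q v / (qnum q w * qnum q (w + v))) • (1 : A) := by
  have hratio : qnum q (w + 1) / qnum q w - qnum q (w + v + 1) / qnum q (w + v)
      = qnum q v / (qnum q w * qnum q (w + v)) := by
    rw [div_sub_div _ _ hw hwv, mul_comm (qnum q w) (qnum q (w + v + 1)), qnum_add_one_mul_sub]
  simp only [hOp, ← hratio, sub_smul]
  abel

theorem Hprod_sum_decomposition_general (A : Type*) [Ring A] [Algebra ℂ A]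
    (q : ℂ) (a : ℕ → A)
    (i r : ℕ) (u v : ℂ)
    (hgen : ∀ k : ℕ, k ≤ r → qnum q (u + (k : ℂ)) ≠ 0 ∧ qnum q (u + v + (k : ℂ)) ≠ 0) :
    Hprod q a i (r + 1) u
      = Hprod q a i (r + 1) (u + v)
        + ∑ k ∈ Finset.range (r + 1),
            (qnum q v / (qnum q (u + (k : ℂ)) * qnum q (u + v + (k : ℂ)))) •
              (Hprod q a i k (u + v) * Hprod q a (i + k + 1) (r - k) (u + (k : ℂ) + 1)) := by
  rw [← sub_eq_iff_eq_add', Hprod, Hprod,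
    List.prod_map_range_sub_prod_map_range (fun k => hOp q a (i + k) (u + k))]
  refine Finset.sum_congr rfl fun k hk => ?_
  obtain ⟨hu, huv⟩ := hgen k (Nat.lt_succ_iff.mp (Finset.mem_range.mp hk))
  have hshift : u + v + k = u + k + v := by ring
  rw [hshift] at huv
  rw [hshift, hOp_sub_hOp_add q a (i + k) v hu huv, mul_smul_one, ← hshift, smul_mul_assoc,
    Nat.add_sub_add_right]
  congr 2
  refine congrArg List.prod (List.map_congr_left fun j _ => ?_)
  push_cast
  ring_nf

/-- The sum-decomposition lemma: for generic `u, v`,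
`H_{i,i+r}(u) = H_{i,i+r}(u+v)
  + Σ_{k=0}^{r} ([v]/([u+k][u+v+k])) H_{i,i+k-1}(u+v) H_{i+k+1,i+r}(u+k+1)`. -/
theorem Hprod_sum_decomposition (A : Type*) [Ring A] [Algebra ℂ A]
    (q : ℂ) (hq : q ≠ 0) (hqq : q - q⁻¹ ≠ 0) (a : ℕ → A)
    (hsq : ∀ i, a i * a i = qnum q 2 • a i)
    (hcomm : ∀ i j, i + 1 < j → a i * a j = a j * a i)
    (hbraid : ∀ i, a i * a (i + 1) * a i - a i = a (i + 1) * a i * a (i + 1) - a (i + 1))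
    (i r : ℕ) (u v : ℂ)
    (hgen : ∀ k : ℕ, k ≤ r → qnum q (u + (k : ℂ)) ≠ 0 ∧ qnum q (u + v + (k : ℂ)) ≠ 0) :
    Hprod q a i (r + 1) u
      = Hprod q a i (r + 1) (u + v)
        + ∑ k ∈ Finset.range (r + 1),
            (qnum q v / (qnum q (u + (k : ℂ)) * qnum q (u + v + (k : ℂ)))) •
              (Hprod q a i k (u + v) * Hprod q a (i + k + 1) (r - k) (u + (k : ℂ) + 1)) :=
  Hprod_sum_decomposition_general A q a i r u v hgen
end
end

section
/- Modulo the left ideal generated by {X·a_k : i ≤ k ≤ i+r} for arbitrary algebra elements X, the ordered product H_{i,i+r}(u) = h_i(u)⋯h_{i+r}(u+r) is congruent to the scalar [u+r+1]/[u]. That is, H_{i,i+r}(u) - ([u+r+1]/[u])·1 lies in the linear span of elements of the form X·a_k with i ≤ k ≤ i+r. -/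
noncomputable section

/-!
Multiplying on the right by `h_k(v) = c • 1 - a_k` acts as the scalar `c` modulo the left ideal
generated by `a_k`, since `x * (c • 1 - a_k) = c • x - x * a_k`. Hence `H_{i,i+r}(u)` is
congruent to the product of the scalars `[u+k+1]/[u+k]`, `0 ≤ k ≤ r`, which telescopes to
`[u+r+1]/[u]`.
-/

section LeftIdeal

variable {R A : Type*} [CommRing R] [Ring A] [Algebra R A] {S : Submodule R A}

theorem mul_smul_one_sub_sub_mem {x b : A} {c e : R} (hx : x - c • 1 ∈ S) (hxb : x * b ∈ S) :
    x * (e • 1 - b) - (c * e) • 1 ∈ S := by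
  have hrw : x * (e • 1 - b) - (c * e) • (1 : A) = e • (x - c • 1) - x * b := by
    rw [mul_sub, mul_smul_one, smul_sub, mul_comm c, mul_smul]
    abel
  rw [hrw]
  exact S.sub_mem (S.smul_mem e hx) hxb

theorem prod_range_smul_one_sub_sub_mem (e : ℕ → R) (b : ℕ → A) (n : ℕ)
    (hb : ∀ x : A, ∀ k < n, x * b k ∈ S) :
    ((List.range n).map fun k => e k • (1 : A) - b k).prod
      - (∏ k ∈ Finset.range n, e k) • (1 : A) ∈ S := by
  induction n with
  | zero => simp
  | succ n ih =>
    rw [List.prod_range_succ, Finset.prod_range_succ]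
    exact mul_smul_one_sub_sub_mem (ih fun x k hk => hb x k (by omega)) (hb _ n n.lt_succ_self)

end LeftIdeal

theorem prod_range_succ_div_of_ne_zero {G₀ : Type*} [CommGroupWithZero G₀] (f : ℕ → G₀)
    (n : ℕ) (hf : ∀ k ≤ n, f k ≠ 0) :
    ∏ k ∈ Finset.range (n + 1), f (k + 1) / f k = f (n + 1) / f 0 := by
  induction n with
  | zero => simp
  | succ n ih =>
    rw [Finset.prod_range_succ, ih fun k hk => hf k (by omega),
      div_mul_div_cancel₀' (hf (n + 1) le_rfl)]

theorem Hprod_eq_prod_smul_one_sub {A : Type*} [Ring A] [Algebra ℂ A] (q : ℂ) (a : ℕ → A) (i n : ℕ) (u : ℂ) :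
    Hprod q a i n u = ((List.range n).map fun k =>
      (qnum q (u + (k + 1 : ℕ)) / qnum q (u + k)) • (1 : A) - a (i + k)).prod := by
  simp only [Hprod, hOp, Nat.cast_add, Nat.cast_one, add_assoc]

theorem Hprod_evaluation_mod_general (A : Type*) [Ring A] [Algebra ℂ A]
    (q : ℂ) (a : ℕ → A)
    (i r : ℕ) (u : ℂ)
    (hgen : ∀ k : ℕ, k ≤ r → qnum q (u + (k : ℂ)) ≠ 0) :
    Hprod q a i (r + 1) u - (qnum q (u + (r : ℂ) + 1) / qnum q u) • (1 : A)
      ∈ Submodule.span ℂ {y : A | ∃ X : A, ∃ k : ℕ, i ≤ k ∧ k ≤ i + r ∧ y = X * a k} := by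
  have hscalar : qnum q (u + (r : ℂ) + 1) / qnum q u
      = ∏ k ∈ Finset.range (r + 1), qnum q (u + (k + 1 : ℕ)) / qnum q (u + k) := by
    rw [prod_range_succ_div_of_ne_zero (fun k => qnum q (u + k)) r hgen]
    push_cast
    rw [add_zero, add_assoc]
  rw [Hprod_eq_prod_smul_one_sub, hscalar]
  exact prod_range_smul_one_sub_sub_mem _ _ _ fun X k hk =>
    Submodule.subset_span ⟨X, i + k, by omega, by omega, rfl⟩

/-- Modulo the span `A_{i,i+r}` of elements `X·a_k` with `i ≤ k ≤ i+r`, the product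
`H_{i,i+r}(u)` equals the scalar `[u+r+1]/[u]`. -/
theorem Hprod_evaluation_mod (A : Type*) [Ring A] [Algebra ℂ A]
    (q : ℂ) (hq : q ≠ 0) (hqq : q - q⁻¹ ≠ 0) (a : ℕ → A)
    (hsq : ∀ i, a i * a i = qnum q 2 • a i)
    (hcomm : ∀ i j, i + 1 < j → a i * a j = a j * a i)
    (hbraid : ∀ i, a i * a (i + 1) * a i - a i = a (i + 1) * a i * a (i + 1) - a (i + 1))
    (i r : ℕ) (u : ℂ)
    (hgen : ∀ k : ℕ, k ≤ r → qnum q (u + (k : ℂ)) ≠ 0) :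
    Hprod q a i (r + 1) u - (qnum q (u + (r : ℂ) + 1) / qnum q u) • (1 : A)
      ∈ Submodule.span ℂ {y : A | ∃ X : A, ∃ k : ℕ, i ≤ k ∧ k ≤ i + r ∧ y = X * a k} :=
  Hprod_evaluation_mod_general A q a i r u hgen
end
end

section
/- Modulo the span A_{i,i+r-1} of right multiples X·a_k for i ≤ k ≤ i+r-1, one has H_{i,i+r}(u) ≡ H_{i,i+r}(u+v) + ([v]/([u][u+v]))·H_{i+1,i+r}(1), for all r ≥ 0, where H_{i+1,i}(1) := 1. -/
noncomputable section

/-!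
Modulo the left ideal `A_{i,j}` generated by `a_i, …, a_j`, each factor `h_k(w)` with `k ≤ j` acts
as the scalar `[w+1]/[w]`, so `[u] H_{i,i+n-1}(u) ≡ [u+n]` by telescoping. Writing
`H_{i,i+r+1} = H_{i,i+r} h_{i+r+1}` and using that `a_{i+r+1}` commutes with `a_i, …, a_{i+r-1}`,
the claim for `r + 1` reduces to the claim for `r` together with the addition formula
`[u+s][u+v] - [u][u+v+s] = [v][s]`.
-/

open Submodule

section LeftIdealSpan

variable (K : Type*) {A : Type*} [CommRing K] [Ring A] [Algebra K A] (a : ℕ → A)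

/-- The span `A_{i,i+m-1}`; `m` counts the generators `a k`. -/
def leftIdealSpan (i m : ℕ) : Submodule K A :=
  span K {y | ∃ X : A, ∃ k, i ≤ k ∧ k + 1 ≤ i + m ∧ y = X * a k}

theorem mul_mem_leftIdealSpan (X : A) {i m k : ℕ} (hik : i ≤ k) (hk : k + 1 ≤ i + m) :
    X * a k ∈ leftIdealSpan K a i m :=
  subset_span ⟨X, k, hik, hk, rfl⟩

theorem leftIdealSpan_mono {i m i' m' : ℕ} (hi : i' ≤ i) (hm : i + m ≤ i' + m') :
    leftIdealSpan K a i m ≤ leftIdealSpan K a i' m' :=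
  span_mono fun _ ⟨X, k, hik, hk, hy⟩ => ⟨X, k, hi.trans hik, hk.trans hm, hy⟩

theorem mul_mem_leftIdealSpan_of_lt (hcomm : ∀ i j, i + 1 < j → a i * a j = a j * a i)
    {i m j : ℕ} (hj : i + m < j) {x : A} (hx : x ∈ leftIdealSpan K a i m) :
    x * a j ∈ leftIdealSpan K a i m := by
  induction hx using span_induction with
  | mem y hy =>
    obtain ⟨X, k, hik, hk, rfl⟩ := hy
    rw [mul_assoc, hcomm k j (by omega), ← mul_assoc]
    exact mul_mem_leftIdealSpan K a _ hik hk
  | zero => simp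
  | add x y _ _ hx hy => simpa only [add_mul] using add_mem hx hy
  | smul c x _ hx => simpa only [smul_mul_assoc] using smul_mem _ c hx

variable {K}

theorem smul_prod_sub_smul_one_mem_leftIdealSpan {c f : ℕ → K} {i n : ℕ}
    (hf : ∀ k < n, f k * c k = f (k + 1)) :
    f 0 • ((List.range n).map fun k => c k • (1 : A) - a (i + k)).prod - f n • (1 : A)
      ∈ leftIdealSpan K a i n := by
  induction n with
  | zero => simp
  | succ n ih =>
    set P := ((List.range n).map fun k => c k • (1 : A) - a (i + k)).prod
    have hP := leftIdealSpan_mono K a le_rfl (m' := n + 1) (by omega)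
      (ih fun k hk => hf k (by omega))
    have key : f 0 • (P * (c n • (1 : A) - a (i + n))) - f (n + 1) • (1 : A)
        = c n • (f 0 • P - f n • (1 : A)) - (f 0 • P) * a (i + n) := by
      rw [← hf n (by omega)]
      simp only [mul_sub, mul_smul_comm, mul_one, smul_mul_assoc]
      module
    rw [List.range_succ, List.map_append, List.prod_append, List.map_singleton,
      List.prod_singleton, key]
    exact sub_mem (smul_mem _ _ hP) (mul_mem_leftIdealSpan K a _ le_self_add (by omega))

end LeftIdealSpan

theorem qnum_one {q : ℂ} (hqq : q - q⁻¹ ≠ 0) : qnum q 1 = 1 := by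
  simp [qnum, Complex.cpow_neg, hqq]

theorem qnum_add_mul_sub_mul_add {q : ℂ} (hq : q ≠ 0) (u v s : ℂ) :
    qnum q (u + s) * qnum q (u + v) - qnum q u * qnum q (u + v + s)
      = qnum q v * qnum q s := by
  have hpow : ∀ x : ℂ, q ^ x ≠ 0 := fun _ => Complex.cpow_ne_zero_iff.2 (.inl hq)
  simp only [qnum, Complex.cpow_add _ _ hq, Complex.cpow_neg]
  field_simp [hpow u, hpow v, hpow s]
  ring

theorem qnum_div_mul_self_cross {q : ℂ} (hq : q ≠ 0) {u v s : ℂ} (hu : qnum q (u + s) ≠ 0)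
    (huv : qnum q (u + v + s) ≠ 0) (hs : qnum q s ≠ 0) :
    qnum q (u + s + 1) / qnum q (u + s) * qnum q (u + s) * qnum q (u + v)
      - qnum q (u + v + s + 1) / qnum q (u + v + s) * qnum q (u + v + s) * qnum q u
      - qnum q (s + 1) / qnum q s * qnum q s * qnum q v = 0 := by
  have h := qnum_add_mul_sub_mul_add hq u v (s + 1)
  rw [← add_assoc, ← add_assoc] at h
  rw [div_mul_cancel₀ _ hu, div_mul_cancel₀ _ huv, div_mul_cancel₀ _ hs]
  linear_combination h

section Hprod

variable {A : Type*} [Ring A] [Algebra ℂ A] {q : ℂ} (a : ℕ → A)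

theorem Hprod_zero (i : ℕ) (u : ℂ) : Hprod q a i 0 u = 1 := rfl

theorem Hprod_succ (i n : ℕ) (u : ℂ) :
    Hprod q a i (n + 1) u = Hprod q a i n u * hOp q a (i + n) (u + n) := by
  simp [Hprod, List.range_succ]

theorem qnum_smul_Hprod_sub_mem_leftIdealSpan {i n : ℕ} {u : ℂ}
    (hu : ∀ k < n, qnum q (u + k) ≠ 0) :
    qnum q u • Hprod q a i n u - qnum q (u + n) • (1 : A) ∈ leftIdealSpan ℂ a i n := by
  have hf : ∀ k < n, qnum q (u + k) * (qnum q (u + k + 1) / qnum q (u + k))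
      = qnum q (u + (k + 1 : ℕ)) := fun k hk => by
    rw [mul_div_cancel₀ _ (hu k hk), Nat.cast_succ, add_assoc]
  simpa only [Nat.cast_zero, add_zero, Hprod, hOp] using
    smul_prod_sub_smul_one_mem_leftIdealSpan a hf

/-- `[u][u+v]` times the difference of the two sides of the congruence. -/
def shiftDefect (q : ℂ) (i r : ℕ) (u v : ℂ) : A :=
  (qnum q u * qnum q (u + v)) • (Hprod q a i (r + 1) u - Hprod q a i (r + 1) (u + v))
    - qnum q v • Hprod q a (i + 1) r 1

theorem shiftDefect_zero (hq : q ≠ 0) (hqq : q - q⁻¹ ≠ 0) (i : ℕ) {u v : ℂ}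
    (hu : qnum q u ≠ 0) (huv : qnum q (u + v) ≠ 0) : shiftDefect a q i 0 u v = 0 := by
  have hscalar : qnum q u * qnum q (u + v) * (qnum q (u + 1) / qnum q u
      - qnum q (u + v + 1) / qnum q (u + v)) = qnum q v := by
    field_simp
    linear_combination qnum_one hqq * qnum q v + qnum_add_mul_sub_mul_add hq u v 1
  simp only [shiftDefect, Hprod_succ, Hprod_zero, hOp, one_mul, Nat.cast_zero, add_zero]
  linear_combination (norm := module) hscalar • (1 : A)

theorem shiftDefect_succ_mem (hq : q ≠ 0) (hqq : q - q⁻¹ ≠ 0)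
    (hcomm : ∀ i j, i + 1 < j → a i * a j = a j * a i) {i r : ℕ} {u v : ℂ}
    (hgen : ∀ k ≤ r + 1, qnum q (u + k) ≠ 0 ∧ qnum q (u + v + k) ≠ 0 ∧ qnum q (k + 1) ≠ 0)
    (ih : shiftDefect a q i r u v ∈ leftIdealSpan ℂ a i r) :
    shiftDefect a q i (r + 1) u v ∈ leftIdealSpan ℂ a i (r + 1) := by
  have hP := qnum_smul_Hprod_sub_mem_leftIdealSpan a (i := i) (n := r + 1) (u := u)
    fun k hk => (hgen k (by omega)).1
  have hP' := qnum_smul_Hprod_sub_mem_leftIdealSpan a (i := i) (n := r + 1) (u := u + v)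
    fun k hk => (hgen k (by omega)).2.1
  have hQ := qnum_smul_Hprod_sub_mem_leftIdealSpan a (i := i + 1) (n := r) (u := 1)
    fun k hk => by rw [add_comm]; exact (hgen k (by omega)).2.2
  have hs : (1 : ℂ) + r = (r + 1 : ℕ) := by push_cast; ring
  rw [qnum_one hqq, one_smul, hs] at hQ
  obtain ⟨hu, huv, -⟩ := hgen (r + 1) le_rfl
  have hr : qnum q (r + 1 : ℕ) ≠ 0 := by rw [Nat.cast_succ]; exact (hgen r (by omega)).2.2
  have key : shiftDefect a q i (r + 1) u v
      = (qnum q (u + (r + 1 : ℕ) + 1) / qnum q (u + (r + 1 : ℕ)) * qnum q (u + v)) •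
          (qnum q u • Hprod q a i (r + 1) u - qnum q (u + (r + 1 : ℕ)) • (1 : A))
        - (qnum q (u + v + (r + 1 : ℕ) + 1) / qnum q (u + v + (r + 1 : ℕ)) * qnum q u) •
          (qnum q (u + v) • Hprod q a i (r + 1) (u + v) - qnum q (u + v + (r + 1 : ℕ)) • (1 : A))
        - (qnum q ((r + 1 : ℕ) + 1) / qnum q (r + 1 : ℕ) * qnum q v) •
          (Hprod q a (i + 1) r 1 - qnum q (r + 1 : ℕ) • (1 : A))
        - shiftDefect a q i r u v * a (i + (r + 1)) := by
    rw [shiftDefect, shiftDefect, Hprod_succ a i (r + 1) u, Hprod_succ a i (r + 1) (u + v),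
      Hprod_succ a (i + 1) r 1, show i + 1 + r = i + (r + 1) by omega, hs]
    simp only [hOp, mul_sub, sub_mul, mul_smul_comm, smul_mul_assoc, mul_one]
    linear_combination (norm := module) (qnum_div_mul_self_cross hq hu huv hr) • (1 : A)
  have hQ' := leftIdealSpan_mono ℂ a (i' := i) (m' := r + 1) (by omega) (by omega) hQ
  have hE := leftIdealSpan_mono ℂ a (m' := r + 1) le_rfl (by omega)
    (mul_mem_leftIdealSpan_of_lt ℂ a hcomm (j := i + (r + 1)) (by omega) ih)
  rw [key]
  exact sub_mem (sub_mem (sub_mem (smul_mem _ _ hP) (smul_mem _ _ hP')) (smul_mem _ _ hQ')) hE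

theorem shiftDefect_mem (hq : q ≠ 0) (hqq : q - q⁻¹ ≠ 0)
    (hcomm : ∀ i j, i + 1 < j → a i * a j = a j * a i) (i : ℕ) {u v : ℂ} {r : ℕ}
    (hgen : ∀ k ≤ r, qnum q (u + k) ≠ 0 ∧ qnum q (u + v + k) ≠ 0 ∧ qnum q (k + 1) ≠ 0) :
    shiftDefect a q i r u v ∈ leftIdealSpan ℂ a i r := by
  induction r with
  | zero =>
    obtain ⟨hu, huv, -⟩ := hgen 0 le_rfl
    simp only [Nat.cast_zero, add_zero] at hu huv
    rw [shiftDefect_zero a hq hqq i hu huv]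
    exact zero_mem _
  | succ r ih =>
    exact shiftDefect_succ_mem a hq hqq hcomm hgen (ih fun k hk => hgen k (by omega))

end Hprod

theorem Hprod_shift_mod_general (A : Type*) [Ring A] [Algebra ℂ A]
    (q : ℂ) (hq : q ≠ 0) (hqq : q - q⁻¹ ≠ 0) (a : ℕ → A)
    (hcomm : ∀ i j, i + 1 < j → a i * a j = a j * a i)
    (i r : ℕ) (u v : ℂ)
    (hgen : ∀ k : ℕ, k ≤ r →
      qnum q (u + (k : ℂ)) ≠ 0 ∧ qnum q (u + v + (k : ℂ)) ≠ 0 ∧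
      qnum q ((k : ℂ) + 1) ≠ 0) :
    Hprod q a i (r + 1) u
        - Hprod q a i (r + 1) (u + v)
        - (qnum q v / (qnum q u * qnum q (u + v))) • Hprod q a (i + 1) r 1
      ∈ Submodule.span ℂ {y : A | ∃ X : A, ∃ k : ℕ, i ≤ k ∧ k + 1 ≤ i + r ∧ y = X * a k} := by
  obtain ⟨hu, huv, -⟩ := hgen 0 r.zero_le
  simp only [Nat.cast_zero, add_zero] at hu huv
  have hdiff : Hprod q a i (r + 1) u - Hprod q a i (r + 1) (u + v)
        - (qnum q v / (qnum q u * qnum q (u + v))) • Hprod q a (i + 1) r 1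
      = (qnum q u * qnum q (u + v))⁻¹ • shiftDefect a q i r u v := by
    rw [shiftDefect, smul_sub, smul_smul, inv_mul_cancel₀ (mul_ne_zero hu huv), one_smul,
      smul_smul, inv_mul_eq_div]
  rw [hdiff]
  exact smul_mem _ _ (shiftDefect_mem a hq hqq hcomm i hgen)

/-- Modulo the span `A_{i,i+r-1}` of elements `X·a_k` with `i ≤ k ≤ i+r-1`, one has
`H_{i,i+r}(u) ≡ H_{i,i+r}(u+v) + ([v]/([u][u+v])) H_{i+1,i+r}(1)` for all `r ≥ 0`. -/
theorem Hprod_shift_mod (A : Type*) [Ring A] [Algebra ℂ A]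
    (q : ℂ) (hq : q ≠ 0) (hqq : q - q⁻¹ ≠ 0) (a : ℕ → A)
    (hsq : ∀ i, a i * a i = qnum q 2 • a i)
    (hcomm : ∀ i j, i + 1 < j → a i * a j = a j * a i)
    (hbraid : ∀ i, a i * a (i + 1) * a i - a i = a (i + 1) * a i * a (i + 1) - a (i + 1))
    (i r : ℕ) (u v : ℂ)
    (hgen : ∀ k : ℕ, k ≤ r →
      qnum q (u + (k : ℂ)) ≠ 0 ∧ qnum q (u + v + (k : ℂ)) ≠ 0 ∧
      qnum q ((k : ℂ) + 1) ≠ 0) :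
    Hprod q a i (r + 1) u
        - Hprod q a i (r + 1) (u + v)
        - (qnum q v / (qnum q u * qnum q (u + v))) • Hprod q a (i + 1) r 1
      ∈ Submodule.span ℂ {y : A | ∃ X : A, ∃ k : ℕ, i ≤ k ∧ k + 1 ≤ i + r ∧ y = X * a k} :=
  Hprod_shift_mod_general A q hq hqq a hcomm i r u v hgen
end
end

section
/- The operators π_i(u) := u⁻¹·1 - π_i in the group algebra of the symmetric group S_N (where π_i are the adjacent transpositions) satisfy the Baxterised Yang-Baxter equation π_i(u)·π_{i+1}(u+v)·π_i(v) = π_{i+1}(v)·π_i(u+v)·π_{i+1}(u) for all nonzero u, v with u + v ≠ 0. -/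
/-! Expanding both sides with `s² = t² = 1` and `sts = tst`, the difference
`(a - s)(c - t)(b - s) - (b - t)(c - s)(a - t)` collapses to `(ab - c(a + b))(s - t)`.
For `a = u⁻¹`, `b = v⁻¹`, `c = (u + v)⁻¹` the scalar factor vanishes, and two adjacent
transpositions of `S_N` satisfy the hypotheses on `s` and `t`. -/

theorem Equiv.swap_braid {α : Type*} [DecidableEq α] {x y z : α}
    (hxy : x ≠ y) (hyz : y ≠ z) (hxz : x ≠ z) :
    swap x y * swap y z * swap x y = swap y z * swap x y * swap y z := by
  rw [swap_mul_swap_mul_swap hxy hxz, ← swap_comm z y, ← swap_comm y x,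
    swap_mul_swap_mul_swap hyz.symm hxz.symm, swap_comm]

section Baxterisation

variable {R A : Type*} [CommRing R] [Ring A] [Algebra R A] {s t : A}

theorem yang_baxter_sub_of_braid (hs : s * s = 1) (ht : t * t = 1)
    (hst : s * t * s = t * s * t) (a b c : R) :
    (a • 1 - s) * (c • 1 - t) * (b • 1 - s) - (b • 1 - t) * (c • 1 - s) * (a • 1 - t) =
      (a * b - c * (a + b)) • (s - t) := by
  simp only [mul_sub, sub_mul, smul_mul_assoc, mul_smul_comm, one_mul, mul_one]
  rw [hs, ht, hst]
  match_scalars <;> ring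

theorem yang_baxter_of_braid_s19 (hs : s * s = 1) (ht : t * t = 1)
    (hst : s * t * s = t * s * t) {a b c : R} (habc : a * b = c * (a + b)) :
    (a • 1 - s) * (c • 1 - t) * (b • 1 - s) = (b • 1 - t) * (c • 1 - s) * (a • 1 - t) := by
  rw [← sub_eq_zero, yang_baxter_sub_of_braid hs ht hst, habc, sub_self, zero_smul]

end Baxterisation

/-- The Baxterised elements `π_i(u) = u⁻¹·1 - π_i` of the group algebra `ℂ[S_N]`,
where `π_i` are the adjacent transpositions, satisfy the Yang-Baxter equation
`π_i(u) π_{i+1}(u+v) π_i(v) = π_{i+1}(v) π_i(u+v) π_{i+1}(u)`. -/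
theorem symmetric_group_baxterised_yang_baxter
    (N i : ℕ) (hi : i + 2 < N) (u v : ℂ)
    (hu : u ≠ 0) (hv : v ≠ 0) (huv : u + v ≠ 0) :
    letI A := MonoidAlgebra ℂ (Equiv.Perm (Fin N))
    letI p1 : A := MonoidAlgebra.of ℂ (Equiv.Perm (Fin N))
      (Equiv.swap ⟨i, by omega⟩ ⟨i + 1, by omega⟩)
    letI p2 : A := MonoidAlgebra.of ℂ (Equiv.Perm (Fin N))
      (Equiv.swap ⟨i + 1, by omega⟩ ⟨i + 2, by omega⟩)
    (u⁻¹ • (1 : A) - p1) * ((u + v)⁻¹ • (1 : A) - p2) * (v⁻¹ • (1 : A) - p1)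
      = (v⁻¹ • (1 : A) - p2) * ((u + v)⁻¹ • (1 : A) - p1) * (u⁻¹ • (1 : A) - p2) := by
  apply yang_baxter_of_braid_s19
  · rw [← map_mul, Equiv.swap_mul_self, map_one]
  · rw [← map_mul, Equiv.swap_mul_self, map_one]
  · simp only [← map_mul]
    rw [Equiv.swap_braid] <;> simp [Fin.ext_iff]
  · field_simp
    ring
end
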